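/- Let 𝒫 ⊂ ℝ^m be a lattice polytope of dimension d. Then rdeg y ≤ d + 1 for all y ∈ M*(𝒫). -/

import Mathlib

open Set

noncomputable section

/-- Lift a point of `ℝ^m` to height 1 in `ℝ^(m+1)`. -/
def lift {m : ℕ} (x : Fin m → ℝ) : Fin (m + 1) → ℝ := Fin.snoc x 1

/-- A point with integer coordinates (a lattice point). -/
def isLat {n : ℕ} (x : Fin n → ℝ) : Prop := ∀ i, ∃ z : ℤ, x i = (z : ℝ)

/-- The cone `C(P)` generated by `P × {1}` (for convex `P`). -/
def coneOf {m : ℕ} (P : Set (Fin m → ℝ)) : Set (Fin (m + 1) → ℝ) :=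
  {y | ∃ (c : ℝ) (p : Fin m → ℝ), 0 ≤ c ∧ p ∈ P ∧ y = c • lift p}

/-- The semigroup `M(P)` generated by the lattice points of `P × {1}`. -/
def Msemi {m : ℕ} (P : Set (Fin m → ℝ)) : AddSubmonoid (Fin (m + 1) → ℝ) :=
  AddSubmonoid.closure {y | ∃ p ∈ P, isLat p ∧ y = lift p}

/-- `M*(P)`: the lattice points in the relative interior of `C(P)`. -/
def Mstar {m : ℕ} (P : Set (Fin m → ℝ)) : Set (Fin (m + 1) → ℝ) :=
  {y | y ∈ intrinsicInterior ℝ (coneOf P) ∧ isLat y}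

/-- The degree: the last coordinate. -/
def deg {m : ℕ} (y : Fin (m + 1) → ℝ) : ℝ := y (Fin.last m)

/-- The reduced `P`-degree of `y`. -/
def rdeg {m : ℕ} (P : Set (Fin m → ℝ)) (y : Fin (m + 1) → ℝ) : ℝ :=
  sInf {r | ∃ z w, z ∈ Mstar P ∧ w ∈ Msemi P ∧ y = z + w ∧ r = deg z}

/-- An empty lattice simplex: its only lattice points are its vertices. -/
def IsEmptyLatticeSimplex {m : ℕ} (s : Set (Fin m → ℝ)) : Prop :=
  ∃ (k : ℕ) (x : Fin (k + 1) → (Fin m → ℝ)), AffineIndependent ℝ x ∧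
    (∀ i, isLat (x i)) ∧ s = convexHull ℝ (Set.range x) ∧
    (∀ p ∈ s, isLat p → p ∈ Set.range x)

/-- A lattice triangulation of `P`: a finite face-closed family of empty lattice
simplices covering `P`, with pairwise disjoint relative interiors (every point of `P`
lies in the relative interior of exactly one simplex), and using every lattice point
of `P` as a vertex. -/
structure IsLatticeTriangulation {m : ℕ} (P : Set (Fin m → ℝ))
    (T : Set (Set (Fin m → ℝ))) : Prop where
  finite : T.Finite
  simplex : ∀ s ∈ T, IsEmptyLatticeSimplex s
  subset : ∀ s ∈ T, s ⊆ P
  partition : ∀ p ∈ P, ∃! s, s ∈ T ∧ p ∈ intrinsicInterior ℝ s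
  vertex : ∀ p ∈ P, isLat p → {p} ∈ T

/-! Write `y = c • lift p` and, by Carathéodory, `p` as a positive convex combination of
affinely independent vertices `vᵢ`, so `y = ∑ μᵢ • lift vᵢ` with at most `d + 1` terms and
`μᵢ > 0`. Peeling off `kᵢ = ⌈μᵢ⌉ - 1` copies of each `lift vᵢ` gives `y = z + w` with
`w ∈ M(P)` and `z = ∑ (μᵢ - kᵢ) • lift vᵢ`, whose coefficients lie in `(0, 1]`, so
`deg z ≤ d + 1`. Then `z = y - w` is a lattice point, and `z` stays in the relative interior
of the cone because `z - ε • y` lies in the cone for small `ε > 0`. -/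

open Filter Topology

theorem mem_intrinsicInterior_iff_mem_nhdsWithin {E : Type*} [AddCommGroup E] [Module ℝ E]
    [TopologicalSpace E] {s : Set E} {y : E} :
    y ∈ intrinsicInterior ℝ s ↔ y ∈ affineSpan ℝ s ∧ s ∈ 𝓝[affineSpan ℝ s] y := by
  constructor
  · rintro ⟨y', hy', rfl⟩
    have := mem_nhds_subtype_iff_nhdsWithin.1 (mem_interior_iff_mem_nhds.1 hy')
    exact ⟨y'.2, mem_of_superset this (image_preimage_subset _ _)⟩
  · rintro ⟨hy, hs⟩
    refine ⟨⟨y, hy⟩, mem_interior_iff_mem_nhds.2 (mem_nhds_subtype_iff_nhdsWithin.2 ?_), rfl⟩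
    exact mem_of_superset (inter_mem self_mem_nhdsWithin hs) fun u hu => ⟨⟨u, hu.1⟩, hu.2, rfl⟩

namespace PointedCone

variable {E : Type*} [AddCommGroup E] [Module ℝ E] [TopologicalSpace E] [IsTopologicalAddGroup E]
  [ContinuousSMul ℝ E] (K : PointedCone ℝ E)

theorem smul_add_mem_intrinsicInterior {x y : E} (hy : y ∈ intrinsicInterior ℝ (K : Set E))
    (hx : x ∈ K) {ε : ℝ} (hε : 0 < ε) : ε • y + x ∈ intrinsicInterior ℝ (K : Set E) := by
  rw [mem_intrinsicInterior_iff_mem_nhdsWithin] at hy ⊢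
  obtain ⟨hyA, hyK⟩ := hy
  set A := affineSpan ℝ (K : Set E)
  -- `A` passes through `0`, so it is the linear subspace `A.direction`
  have hA (u : E) : u ∈ A ↔ u ∈ A.direction := by
    simpa using (A.vsub_right_mem_direction_iff_mem (subset_affineSpan ℝ _ K.zero_mem) u).symm
  have hxA : x ∈ A.direction := (hA x).1 (subset_affineSpan ℝ _ hx)
  have hinv : Tendsto (fun u => ε⁻¹ • (u - x)) (𝓝[A] (ε • y + x)) (𝓝[A] y) := by
    have hcont : Continuous fun u : E => ε⁻¹ • (u - x) := by fun_prop
    have := hcont.continuousWithinAt.tendsto_nhdsWithin (s := A) (t := A) (x := ε • y + x)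
      fun u hu => (hA _).2 (A.direction.smul_mem _ (A.direction.sub_mem ((hA u).1 hu) hxA))
    simpa [inv_smul_smul₀ hε.ne'] using this
  refine ⟨(hA _).2 (A.direction.add_mem (A.direction.smul_mem ε ((hA y).1 hyA)) hxA),
    mem_of_superset (hinv hyK) fun u hu => ?_⟩
  simpa [smul_inv_smul₀ hε.ne'] using K.add_mem (K.smul_mem hε.le hu) hx

theorem sum_smul_mem_intrinsicInterior {ι : Type*} [Fintype ι] {g : ι → E} (hg : ∀ i, g i ∈ K)
    {μ a : ι → ℝ} (hμ : ∀ i, 0 ≤ μ i) (ha : ∀ i, 0 < a i)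
    (hy : ∑ i, μ i • g i ∈ intrinsicInterior ℝ (K : Set E)) :
    ∑ i, a i • g i ∈ intrinsicInterior ℝ (K : Set E) := by
  cases isEmpty_or_nonempty ι
  · simpa using hy
  set ε := Finset.univ.inf' Finset.univ_nonempty fun i => a i / (μ i + 1)
  have hε : 0 < ε := (Finset.lt_inf'_iff _).2 fun i _ => div_pos (ha i) (by linarith [hμ i])
  have hεμ (i : ι) : ε * μ i ≤ a i := by
    have : ε ≤ a i / (μ i + 1) := Finset.inf'_le _ (Finset.mem_univ i)
    rw [le_div_iff₀ (by linarith [hμ i])] at this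
    nlinarith [hμ i]
  have hsplit : ∑ i, a i • g i = ε • ∑ i, μ i • g i + ∑ i, (a i - ε * μ i) • g i := by
    simp only [Finset.smul_sum, smul_smul, ← Finset.sum_add_distrib, ← add_smul, add_sub_cancel]
  rw [hsplit]
  exact K.smul_add_mem_intrinsicInterior hy
    (K.sum_mem fun i _ => K.smul_mem (sub_nonneg.2 (hεμ i)) (hg i)) hε

end PointedCone

theorem exists_nat_sub_mem_Ioc {μ : ℝ} (hμ : 0 < μ) : ∃ k : ℕ, μ - k ∈ Ioc 0 1 := by
  refine ⟨⌈μ⌉₊ - 1, ?_⟩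
  rw [Nat.cast_sub (Nat.one_le_ceil_iff.2 hμ), Nat.cast_one]
  constructor <;> linarith [Nat.ceil_lt_add_one hμ.le, Nat.le_ceil μ]

section LatticePolytope

variable {m : ℕ}

theorem smul_lift (c : ℝ) (p : Fin m → ℝ) : c • lift p = Fin.snoc (c • p) c := by
  ext j
  refine Fin.lastCases ?_ (fun i => ?_) j <;> simp [lift]

theorem deg_smul_lift (c : ℝ) (p : Fin m → ℝ) : deg (c • lift p) = c := by
  simp [deg, lift]

theorem deg_sum_smul_lift {ι : Type*} [Fintype ι] (μ : ι → ℝ) (v : ι → Fin m → ℝ) :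
    deg (∑ i, μ i • lift (v i)) = ∑ i, μ i := by
  simp [deg, lift, Finset.sum_apply]

theorem lift_sum_smul {ι : Type*} [Fintype ι] {a : ι → ℝ} (ha : ∑ i, a i = 1)
    (v : ι → Fin m → ℝ) : lift (∑ i, a i • v i) = ∑ i, a i • lift (v i) := by
  ext j
  refine Fin.lastCases ?_ (fun i => ?_) j <;> simp [lift, Finset.sum_apply, ha]

def intLattice (n : ℕ) : AddSubgroup (Fin n → ℝ) where
  carrier := {x | isLat x}
  add_mem' {x y} hx hy i := by
    obtain ⟨a, ha⟩ := hx i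
    obtain ⟨b, hb⟩ := hy i
    exact ⟨a + b, by simp [ha, hb]⟩
  zero_mem' _ := ⟨0, by simp⟩
  neg_mem' {x} hx i := by
    obtain ⟨a, ha⟩ := hx i
    exact ⟨-a, by simp [ha]⟩

theorem mem_intLattice {n : ℕ} {x : Fin n → ℝ} : x ∈ intLattice n ↔ isLat x := Iff.rfl

theorem isLat_lift {p : Fin m → ℝ} (hp : isLat p) : isLat (lift p) := by
  intro j
  refine Fin.lastCases ⟨1, by simp [lift]⟩ (fun i => ?_) j
  obtain ⟨z, hz⟩ := hp i
  exact ⟨z, by simpa [lift] using hz⟩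

theorem lift_mem_Msemi {P : Set (Fin m → ℝ)} {p : Fin m → ℝ} (hp : p ∈ P) (hlat : isLat p) :
    lift p ∈ Msemi P :=
  AddSubmonoid.subset_closure ⟨p, hp, hlat, rfl⟩

theorem Msemi_le_intLattice (P : Set (Fin m → ℝ)) :
    Msemi P ≤ (intLattice (m + 1)).toAddSubmonoid :=
  AddSubmonoid.closure_le.2 fun _ ⟨_, _, hlat, h⟩ => h ▸ isLat_lift hlat

theorem add_mem_coneOf {P : Set (Fin m → ℝ)} (hP : Convex ℝ P) {x y : Fin (m + 1) → ℝ}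
    (hx : x ∈ coneOf P) (hy : y ∈ coneOf P) : x + y ∈ coneOf P := by
  obtain ⟨a, p, ha, hp, rfl⟩ := hx
  obtain ⟨b, q, hb, hq, rfl⟩ := hy
  rcases (add_nonneg ha hb).eq_or_lt with hab | hab
  · obtain ⟨rfl, rfl⟩ : a = 0 ∧ b = 0 := ⟨by linarith, by linarith⟩
    exact ⟨0, p, le_rfl, hp, by simp⟩
  refine ⟨a + b, (a / (a + b)) • p + (b / (a + b)) • q, hab.le,
    hP hp hq (by positivity) (by positivity) (by field_simp), ?_⟩
  simp only [smul_lift, smul_add, smul_smul, mul_div_cancel₀ _ hab.ne']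
  ext j
  refine Fin.lastCases ?_ (fun i => ?_) j <;> simp

def pointedConeOf {P : Set (Fin m → ℝ)} (hP : Convex ℝ P) (hne : P.Nonempty) :
    PointedCone ℝ (Fin (m + 1) → ℝ) where
  carrier := coneOf P
  add_mem' := add_mem_coneOf hP
  zero_mem' := ⟨0, hne.some, le_rfl, hne.some_mem, by simp⟩
  smul_mem' c := by
    rintro _ ⟨a, p, ha, hp, rfl⟩
    exact ⟨c * a, p, mul_nonneg c.2 ha, hp, smul_smul (c : ℝ) a (lift p)⟩

theorem exists_sum_smul_lift_eq {V : Set (Fin m → ℝ)} {p : Fin m → ℝ}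
    (hp : p ∈ convexHull ℝ V) {c : ℝ} (hc : 0 < c) :
    ∃ (ι : Type) (_ : Fintype ι) (v : ι → Fin m → ℝ) (μ : ι → ℝ), range v ⊆ V ∧
      Fintype.card ι ≤ Module.finrank ℝ (vectorSpan ℝ (convexHull ℝ V)) + 1 ∧
      (∀ i, 0 < μ i) ∧ c • lift p = ∑ i, μ i • lift (v i) := by
  obtain ⟨ι, _, v, a, hvV, hind, ha, ha1, rfl⟩ := eq_pos_convex_span_of_mem_convexHull hp
  refine ⟨ι, _, v, fun i => c * a i, hvV, hind.card_le_finrank_succ.trans ?_,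
    fun i => mul_pos hc (ha i), ?_⟩
  · exact Nat.succ_le_succ (Submodule.finrank_mono
      (vectorSpan_mono ℝ (hvV.trans (subset_convexHull ℝ V))))
  · simp only [lift_sum_smul ha1, Finset.smul_sum, smul_smul]

end LatticePolytope

theorem stmt5_general {m d : ℕ} (P : Set (Fin m → ℝ)) (V : Set (Fin m → ℝ))
    (hVlat : ∀ p ∈ V, isLat p) (hP : P = convexHull ℝ V)
    (hdim : Module.finrank ℝ (vectorSpan ℝ P) = d) :
    ∀ y ∈ Mstar P, ∃ z w, z ∈ Mstar P ∧ w ∈ Msemi P ∧ y = z + w ∧ deg z ≤ d + 1 := by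
  rintro y ⟨hyint, hylat⟩
  by_cases hdeg : deg y ≤ d + 1
  · exact ⟨y, 0, ⟨hyint, hylat⟩, zero_mem _, (add_zero y).symm, hdeg⟩
  obtain ⟨c, p, -, hpP, rfl⟩ := intrinsicInterior_subset hyint
  have hc : 0 < c := by
    rw [deg_smul_lift] at hdeg
    linarith
  subst hP
  obtain ⟨ι, _, v, μ, hvV, hcard, hμ, hy⟩ := exists_sum_smul_lift_eq hpP hc
  rw [hy] at hyint hylat ⊢
  have hvP (i : ι) : v i ∈ convexHull ℝ V := subset_convexHull ℝ V (hvV ⟨i, rfl⟩)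
  set K := pointedConeOf (convex_convexHull ℝ V) ⟨_, hpP⟩
  choose k hk using fun i => exists_nat_sub_mem_Ioc (hμ i)
  have hw : ∑ i, k i • lift (v i) ∈ Msemi (convexHull ℝ V) :=
    sum_mem fun i _ => nsmul_mem (lift_mem_Msemi (hvP i) (hVlat _ (hvV ⟨i, rfl⟩))) _
  have hyzw : ∑ i, μ i • lift (v i) = ∑ i, (μ i - k i) • lift (v i) + ∑ i, k i • lift (v i) := by
    simp only [← Finset.sum_add_distrib, ← Nat.cast_smul_eq_nsmul ℝ, ← add_smul, sub_add_cancel]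
  refine ⟨_, _, ⟨?_, ?_⟩, hw, hyzw, ?_⟩
  · exact K.sum_smul_mem_intrinsicInterior
      (fun i => ⟨1, v i, zero_le_one, hvP i, (one_smul _ _).symm⟩)
      (fun i => (hμ i).le) (fun i => (hk i).1) hyint
  · rw [← mem_intLattice, eq_sub_of_add_eq hyzw.symm]
    exact sub_mem hylat (Msemi_le_intLattice _ hw)
  · rw [deg_sum_smul_lift]
    calc ∑ i, (μ i - k i) ≤ ∑ _i : ι, (1 : ℝ) := Finset.sum_le_sum fun i _ => (hk i).2
      _ = Fintype.card ι := by simp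
      _ ≤ d + 1 := by exact_mod_cast hdim ▸ hcard

/-- for a lattice polytope of dimension `d`, `rdeg y ≤ d + 1`
for all `y ∈ M*(P)`. -/
theorem stmt5 {m d : ℕ} (P : Set (Fin m → ℝ)) (V : Set (Fin m → ℝ))
    (hV : V.Finite) (hVlat : ∀ p ∈ V, isLat p) (hP : P = convexHull ℝ V)
    (hdim : Module.finrank ℝ (vectorSpan ℝ P) = d) :
    ∀ y ∈ Mstar P, ∃ z w, z ∈ Mstar P ∧ w ∈ Msemi P ∧ y = z + w ∧ deg z ≤ d + 1 :=
  stmt5_general P V hVlat hP hdim
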